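/- arXiv:2002.04714 — 6 statements merged into one kernel-verified Lean document; each statement's English description precedes it below -/
import Mathlib

section
/- For all real x > 0, x^3 (coth(x) + x(1 - coth(x)^2)) - 6 (x coth(x) - 1)^2 > 0. -/
/-!
Multiplying by `16 sinh² x` and substituting `t = 2x` turns the expression into
`(t³ + 48t) sinh t + 48 - (12t² + 48) cosh t - t⁴ - 12t²`. This vanishes at `0`, and its
derivative is `t` times a function of the same shape (a polynomial combination of `sinh t`,
`cosh t` and `1`) that again vanishes at `0`. Iterating, after six differentiations one reaches
`t sinh t > 0`, and positivity propagates back up the chain.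
-/

noncomputable def coth (x : ℝ) : ℝ := Real.cosh x / Real.sinh x

open Real

theorem pos_of_deriv_pos {f : ℝ → ℝ} (hf : ContinuousOn f (Set.Ici 0)) (h0 : f 0 = 0)
    (hf' : ∀ t, 0 < t → 0 < deriv f t) {t : ℝ} (ht : 0 < t) : 0 < f t := by
  have hmono : StrictMonoOn f (Set.Ici 0) :=
    strictMonoOn_of_deriv_pos (convex_Ici 0) hf (by rw [interior_Ici]; exact hf')
  simpa only [h0] using hmono Set.self_mem_Ici ht.le ht

theorem sinh_lt_mul_cosh {t : ℝ} (ht : 0 < t) : sinh t < t * cosh t := by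
  rw [← sub_pos]
  refine pos_of_deriv_pos (f := fun s => s * cosh s - sinh s)
    (by fun_prop) (by simp) (fun s hs => ?_) ht
  refine (mul_pos hs (sinh_pos_iff.2 hs)).trans_eq ?_
  simp (disch := fun_prop) [deriv_fun_sub, deriv_fun_mul]

theorem three_mul_mul_cosh_lt {t : ℝ} (ht : 0 < t) : 3 * t * cosh t < (t ^ 2 + 3) * sinh t := by
  rw [← sub_pos]
  refine pos_of_deriv_pos (f := fun s => (s ^ 2 + 3) * sinh s - 3 * s * cosh s) (by fun_prop)
    (by simp) (fun s hs => ?_) ht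
  refine (mul_pos hs (sub_pos.2 (sinh_lt_mul_cosh hs))).trans_eq ?_
  simp (disch := fun_prop) only [deriv_fun_sub, deriv_fun_add, deriv_fun_mul, deriv_fun_pow,
    deriv_id'', deriv_const', deriv_const_mul_id', Real.deriv_sinh, Real.deriv_cosh]
  ring

theorem five_mul_mul_sinh_add_eight_lt {t : ℝ} (ht : 0 < t) :
    5 * t * sinh t + 8 < (t ^ 2 + 8) * cosh t := by
  rw [← sub_pos]
  refine pos_of_deriv_pos (f := fun s => (s ^ 2 + 8) * cosh s - (5 * s * sinh s + 8))
    (by fun_prop) (by simp) (fun s hs => ?_) ht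
  refine (sub_pos.2 (three_mul_mul_cosh_lt hs)).trans_eq ?_
  simp (disch := fun_prop) only [deriv_fun_sub, deriv_fun_add, deriv_fun_mul, deriv_fun_pow,
    deriv_id'', deriv_const', deriv_const_mul_id', Real.deriv_sinh, Real.deriv_cosh]
  ring

theorem seven_mul_mul_cosh_add_eight_mul_lt {t : ℝ} (ht : 0 < t) :
    7 * t * cosh t + 8 * t < (t ^ 2 + 15) * sinh t := by
  rw [← sub_pos]
  refine pos_of_deriv_pos (f := fun s => (s ^ 2 + 15) * sinh s - (7 * s * cosh s + 8 * s))
    (by fun_prop) (by simp) (fun s hs => ?_) ht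
  refine (sub_pos.2 (five_mul_mul_sinh_add_eight_lt hs)).trans_eq ?_
  simp (disch := fun_prop) only [deriv_fun_sub, deriv_fun_add, deriv_fun_mul, deriv_fun_pow,
    deriv_id'', deriv_const', deriv_const_mul_id', Real.deriv_sinh, Real.deriv_cosh]
  ring

theorem nine_mul_mul_sinh_add_lt {t : ℝ} (ht : 0 < t) :
    9 * t * sinh t + 4 * t ^ 2 + 24 < (t ^ 2 + 24) * cosh t := by
  rw [← sub_pos]
  refine pos_of_deriv_pos (f := fun s => (s ^ 2 + 24) * cosh s - (9 * s * sinh s + 4 * s ^ 2 + 24))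
    (by fun_prop) (by simp) (fun s hs => ?_) ht
  refine (sub_pos.2 (seven_mul_mul_cosh_add_eight_mul_lt hs)).trans_eq ?_
  simp (disch := fun_prop) only [deriv_fun_sub, deriv_fun_add, deriv_fun_mul, deriv_fun_pow,
    deriv_id'', deriv_const', deriv_const_mul_id', Real.deriv_sinh, Real.deriv_cosh]
  ring

theorem mul_cosh_add_lt_mul_sinh_add {t : ℝ} (ht : 0 < t) :
    (12 * t ^ 2 + 48) * cosh t + t ^ 4 + 12 * t ^ 2 < (t ^ 3 + 48 * t) * sinh t + 48 := by
  rw [← sub_pos]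
  refine pos_of_deriv_pos (f := fun s => (s ^ 3 + 48 * s) * sinh s + 48 -
      ((12 * s ^ 2 + 48) * cosh s + s ^ 4 + 12 * s ^ 2))
    (by fun_prop) (by simp) (fun s hs => ?_) ht
  refine (mul_pos hs (sub_pos.2 (nine_mul_mul_sinh_add_lt hs))).trans_eq ?_
  simp (disch := fun_prop) only [deriv_fun_sub, deriv_fun_add, deriv_fun_mul, deriv_fun_pow,
    deriv_id'', deriv_const', deriv_const_mul_id', Real.deriv_sinh, Real.deriv_cosh]
  ring

theorem six_mul_sq_mul_cosh_sub_sinh_lt {x : ℝ} (hx : 0 < x) :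
    6 * (x * cosh x - sinh x) ^ 2 < x ^ 3 * (sinh x * cosh x - x) := by
  have key := mul_cosh_add_lt_mul_sinh_add (by positivity : 0 < 2 * x)
  rw [sinh_two_mul, cosh_two_mul] at key
  linear_combination key / 16 + (3 * x ^ 2 - 3) * cosh_sq x

theorem stmt_1 (x : ℝ) (hx : 0 < x) :
    x ^ 3 * (coth x + x * (1 - (coth x) ^ 2)) - 6 * (x * coth x - 1) ^ 2 > 0 := by
  have hs : 0 < sinh x := sinh_pos_iff.2 hx
  have hexpr : x ^ 3 * (coth x + x * (1 - (coth x) ^ 2)) - 6 * (x * coth x - 1) ^ 2 =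
      (x ^ 3 * (sinh x * cosh x - x) - 6 * (x * cosh x - sinh x) ^ 2) / sinh x ^ 2 := by
    rw [coth]
    field_simp
    linear_combination (-x ^ 4) * cosh_sq x
  rw [hexpr]
  exact div_pos (sub_pos.2 (six_mul_sq_mul_cosh_sub_sinh_lt hx)) (by positivity)
end

section
/- For all real x > 0 and y with 0 < y < 1, coth(x) - y coth(xy) > 0; equivalently, the function ψ(a) = a coth(a) - 1 satisfies ψ(xy) < ψ(x). -/
noncomputable def ψ (a : ℝ) : ℝ := a * coth a - 1

open Real Set

lemma hasDerivAt_coth {a : ℝ} (ha : a ≠ 0) : HasDerivAt coth (-1 / sinh a ^ 2) a := by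
  refine ((hasDerivAt_cosh a).div (hasDerivAt_sinh a) (sinh_ne_zero.2 ha)).congr_deriv ?_
  congr 1
  linear_combination -cosh_sq_sub_sinh_sq a

lemma hasDerivAt_ψ {a : ℝ} (ha : a ≠ 0) :
    HasDerivAt ψ ((sinh a * cosh a - a) / sinh a ^ 2) a := by
  have hs : sinh a ≠ 0 := sinh_ne_zero.2 ha
  refine (((hasDerivAt_id' a).mul (hasDerivAt_coth ha)).sub_const 1).congr_deriv ?_
  simp only [coth]
  field_simp
  ring

lemma self_lt_sinh_mul_cosh {a : ℝ} (ha : 0 < a) : a < sinh a * cosh a := by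
  have h2a : 2 * a < sinh (2 * a) := self_lt_sinh_iff.2 (by positivity)
  rw [sinh_two_mul] at h2a
  linarith

lemma strictMonoOn_ψ : StrictMonoOn ψ (Ioi 0) := by
  have hderiv (a : ℝ) (ha : 0 < a) := hasDerivAt_ψ ha.ne'
  refine strictMonoOn_of_hasDerivWithinAt_pos (convex_Ioi 0)
    (f' := fun a => (sinh a * cosh a - a) / sinh a ^ 2)
    (fun a ha => (hderiv a ha).continuousAt.continuousWithinAt) ?_ ?_ <;> rw [interior_Ioi]
  · exact fun a ha => (hderiv a ha).hasDerivWithinAt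
  · intro a ha
    have hs : 0 < sinh a := sinh_pos_iff.2 ha
    exact div_pos (sub_pos.2 (self_lt_sinh_mul_cosh ha)) (by positivity)

theorem stmt_4 (x y : ℝ) (hx : 0 < x) (hy0 : 0 < y) (hy1 : y < 1) :
    coth x - y * coth (x * y) > 0 ∧ ψ (x * y) < ψ x := by
  have hψ : ψ (x * y) < ψ x :=
    strictMonoOn_ψ (mul_pos hx hy0) hx (mul_lt_of_lt_one_right hx hy1)
  have hdiff : coth x - y * coth (x * y) = (ψ x - ψ (x * y)) / x := by
    simp only [ψ]
    field_simp
    ring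
  exact ⟨hdiff ▸ div_pos (sub_pos.2 hψ) hx, hψ⟩
end

section
/- For all real x > 0 and y in (0,1), 8/(sinh(2x) - 2x) - (coth(xy) + xy(1 - coth(xy)^2))/(xy coth(xy) - 1)^2 < 0. -/
open Real

private lemma pos_of_hasDerivAt (f f' : ℝ → ℝ) (hf : ∀ t, HasDerivAt f (f' t) t)
    (h0 : f 0 = 0) (hd : ∀ t, 0 < t → 0 < f' t) {t : ℝ} (ht : 0 < t) : 0 < f t := by
  have hmono : StrictMonoOn f (Set.Ici 0) := by
    apply strictMonoOn_of_deriv_pos (convex_Ici 0)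
    · exact fun u _ => (hf u).continuousAt.continuousWithinAt
    · intro u hu
      rw [interior_Ici] at hu
      rw [(hf u).deriv]
      exact hd u hu
  have := hmono Set.self_mem_Ici (Set.mem_Ici.2 ht.le) ht
  simpa [h0] using this

-- Q t = cosh t - 1 - t^2/2 > 0
private lemma lemQ {t : ℝ} (ht : 0 < t) : 0 < Real.cosh t - 1 - t ^ 2 / 2 := by
  apply pos_of_hasDerivAt (fun u => Real.cosh u - 1 - u ^ 2 / 2)
      (fun u => Real.sinh u - u) _ (by simp) _ ht
  · intro u
    have h := ((Real.hasDerivAt_cosh u).sub_const 1).sub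
      (((hasDerivAt_pow 2 u)).div_const 2)
    refine h.congr_deriv (Eq.symm ?_)
    push_cast; ring
  · intro u hu
    have := (Real.self_lt_sinh_iff (x := u)).2 hu
    linarith

-- P t = sinh t - t - t^3/6 > 0
private lemma lemP {t : ℝ} (ht : 0 < t) : 0 < Real.sinh t - t - t ^ 3 / 6 := by
  apply pos_of_hasDerivAt (fun u => Real.sinh u - u - u ^ 3 / 6)
      (fun u => Real.cosh u - 1 - u ^ 2 / 2) _ (by simp) _ ht
  · intro u
    have h := ((Real.hasDerivAt_sinh u).sub (hasDerivAt_id u)).sub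
      ((hasDerivAt_pow 3 u).div_const 6)
    refine h.congr_deriv (Eq.symm ?_)
    push_cast; ring
  · intro u hu; exact lemQ hu

-- B t = t cosh t - sinh t > 0
private lemma lemB {t : ℝ} (ht : 0 < t) : 0 < t * Real.cosh t - Real.sinh t := by
  apply pos_of_hasDerivAt (fun u => u * Real.cosh u - Real.sinh u)
      (fun u => u * Real.sinh u) _ (by simp) _ ht
  · intro u
    have h := ((hasDerivAt_id u).mul (Real.hasDerivAt_cosh u)).sub (Real.hasDerivAt_sinh u)
    refine h.congr_deriv (Eq.symm ?_)
    simp only [id_eq]; ring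
  · intro u hu
    exact mul_pos hu (Real.sinh_pos_iff.2 hu)

-- K t = t + 2 t s^2 - s c > 0
private lemma lemK {t : ℝ} (ht : 0 < t) :
    0 < t + 2 * t * Real.sinh t ^ 2 - Real.sinh t * Real.cosh t := by
  apply pos_of_hasDerivAt
      (fun u => u + 2 * u * Real.sinh u ^ 2 - Real.sinh u * Real.cosh u)
      (fun u => 4 * u * Real.sinh u * Real.cosh u) _ (by simp) _ ht
  · intro u
    have h := ((hasDerivAt_id u).add
        (((hasDerivAt_id u).const_mul 2).mul ((Real.hasDerivAt_sinh u).pow 2))).sub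
      ((Real.hasDerivAt_sinh u).mul (Real.hasDerivAt_cosh u))
    simp only [id_eq] at h ⊢
    refine h.congr_deriv (Eq.symm ?_)
    push_cast [Pi.mul_apply, Pi.pow_apply, Pi.sub_apply, id_eq]
    linear_combination Real.cosh_sq u
  · intro u hu
    have hs := Real.sinh_pos_iff.2 hu
    have hc := Real.cosh_pos (x := u)
    positivity

-- M t = (4t^2+3) s c - 6 t s^2 - 3 t > 0
private lemma lemM {t : ℝ} (ht : 0 < t) :
    0 < (4 * t ^ 2 + 3) * (Real.sinh t * Real.cosh t) - 6 * t * Real.sinh t ^ 2 - 3 * t := by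
  apply pos_of_hasDerivAt
      (fun u => (4 * u ^ 2 + 3) * (Real.sinh u * Real.cosh u) - 6 * u * Real.sinh u ^ 2 - 3 * u)
      (fun u => 4 * u * (u + 2 * u * Real.sinh u ^ 2 - Real.sinh u * Real.cosh u)) _
      (by simp) _ ht
  · intro u
    have h := (((((hasDerivAt_pow 2 u).const_mul 4).add_const 3).mul
        ((Real.hasDerivAt_sinh u).mul (Real.hasDerivAt_cosh u))).sub
      (((hasDerivAt_id u).const_mul 6).mul ((Real.hasDerivAt_sinh u).pow 2))).sub
      ((hasDerivAt_id u).const_mul 3)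
    simp only [id_eq] at h ⊢
    refine h.congr_deriv (Eq.symm ?_)
    push_cast [Pi.mul_apply, Pi.pow_apply, Pi.sub_apply, id_eq]
    linear_combination (-(4*u^2+3)) * Real.cosh_sq u
  · intro u hu
    exact mul_pos (by linarith) (lemK hu)

-- H t = t^2 + 2 t^2 s^2 + 4 s^2 - 5 t s c > 0
private lemma lemH {t : ℝ} (ht : 0 < t) :
    0 < t ^ 2 + 2 * t ^ 2 * Real.sinh t ^ 2 + 4 * Real.sinh t ^ 2
      - 5 * t * (Real.sinh t * Real.cosh t) := by
  apply pos_of_hasDerivAt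
      (fun u => u ^ 2 + 2 * u ^ 2 * Real.sinh u ^ 2 + 4 * Real.sinh u ^ 2
        - 5 * u * (Real.sinh u * Real.cosh u))
      (fun u => (4 * u ^ 2 + 3) * (Real.sinh u * Real.cosh u) - 6 * u * Real.sinh u ^ 2 - 3 * u)
      _ (by simp) _ ht
  · intro u
    have h := ((((hasDerivAt_pow 2 u).add
        ((((hasDerivAt_pow 2 u).const_mul 2)).mul ((Real.hasDerivAt_sinh u).pow 2)))).add
        (((Real.hasDerivAt_sinh u).pow 2).const_mul 4)).sub
      ((((hasDerivAt_id u).const_mul 5)).mul ((Real.hasDerivAt_sinh u).mul (Real.hasDerivAt_cosh u)))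
    simp only [id_eq] at h ⊢
    refine h.congr_deriv (Eq.symm ?_)
    push_cast [Pi.mul_apply, Pi.pow_apply, Pi.sub_apply, id_eq]
    linear_combination (5*u) * Real.cosh_sq u
  · intro u hu
    exact lemM hu

-- N t = (4t^2+15) s c - 14 t s^2 - 15 t > 0
private lemma lemN {t : ℝ} (ht : 0 < t) :
    0 < (4 * t ^ 2 + 15) * (Real.sinh t * Real.cosh t) - 14 * t * Real.sinh t ^ 2 - 15 * t := by
  apply pos_of_hasDerivAt
      (fun u => (4 * u ^ 2 + 15) * (Real.sinh u * Real.cosh u) - 14 * u * Real.sinh u ^ 2 - 15 * u)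
      (fun u => 4 * (u ^ 2 + 2 * u ^ 2 * Real.sinh u ^ 2 + 4 * Real.sinh u ^ 2
        - 5 * u * (Real.sinh u * Real.cosh u))) _ (by simp) _ ht
  · intro u
    have h := (((((hasDerivAt_pow 2 u).const_mul 4).add_const 15).mul
        ((Real.hasDerivAt_sinh u).mul (Real.hasDerivAt_cosh u))).sub
      (((hasDerivAt_id u).const_mul 14).mul ((Real.hasDerivAt_sinh u).pow 2))).sub
      ((hasDerivAt_id u).const_mul 15)
    simp only [id_eq] at h ⊢
    refine h.congr_deriv (Eq.symm ?_)
    push_cast [Pi.mul_apply, Pi.pow_apply, Pi.sub_apply, id_eq]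
    linear_combination (-(4*u^2+15)) * Real.cosh_sq u
  · intro u hu
    have := lemH hu
    linarith

-- G t = 2 t^2 s^2 + 12 s^2 - 9 t s c - 3 t^2 > 0
private lemma lemG {t : ℝ} (ht : 0 < t) :
    0 < 2 * t ^ 2 * Real.sinh t ^ 2 + 12 * Real.sinh t ^ 2
      - 9 * t * (Real.sinh t * Real.cosh t) - 3 * t ^ 2 := by
  apply pos_of_hasDerivAt
      (fun u => 2 * u ^ 2 * Real.sinh u ^ 2 + 12 * Real.sinh u ^ 2
        - 9 * u * (Real.sinh u * Real.cosh u) - 3 * u ^ 2)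
      (fun u => (4 * u ^ 2 + 15) * (Real.sinh u * Real.cosh u) - 14 * u * Real.sinh u ^ 2 - 15 * u)
      _ (by simp) _ ht
  · intro u
    have h := (((((hasDerivAt_pow 2 u).const_mul 2).mul ((Real.hasDerivAt_sinh u).pow 2)).add
        (((Real.hasDerivAt_sinh u).pow 2).const_mul 12)).sub
      (((hasDerivAt_id u).const_mul 9).mul ((Real.hasDerivAt_sinh u).mul (Real.hasDerivAt_cosh u)))).sub
      ((hasDerivAt_pow 2 u).const_mul 3)
    simp only [id_eq] at h ⊢
    refine h.congr_deriv (Eq.symm ?_)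
    push_cast [Pi.mul_apply, Pi.pow_apply, Pi.sub_apply, id_eq]
    linear_combination (9*u) * Real.cosh_sq u
  · intro u hu; exact lemN hu

-- F t = t^3 (2 s c - 2 t) - 12 (t c - s)^2 > 0
private lemma lemF {t : ℝ} (ht : 0 < t) :
    0 < t ^ 3 * (2 * (Real.sinh t * Real.cosh t) - 2 * t)
      - 12 * (t * Real.cosh t - Real.sinh t) ^ 2 := by
  apply pos_of_hasDerivAt
      (fun u => u ^ 3 * (2 * (Real.sinh u * Real.cosh u) - 2 * u)
        - 12 * (u * Real.cosh u - Real.sinh u) ^ 2)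
      (fun u => 2 * u * (2 * u ^ 2 * Real.sinh u ^ 2 + 12 * Real.sinh u ^ 2
        - 9 * u * (Real.sinh u * Real.cosh u) - 3 * u ^ 2)) _ (by simp) _ ht
  · intro u
    have h := ((hasDerivAt_pow 3 u).mul
        ((((Real.hasDerivAt_sinh u).mul (Real.hasDerivAt_cosh u)).const_mul 2).sub
          ((hasDerivAt_id u).const_mul 2))).sub
      (((((hasDerivAt_id u).mul (Real.hasDerivAt_cosh u)).sub (Real.hasDerivAt_sinh u)).pow 2).const_mul 12)
    simp only [id_eq] at h ⊢
    refine h.congr_deriv (Eq.symm ?_)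
    push_cast [Pi.mul_apply, Pi.pow_apply, Pi.sub_apply, id_eq]
    linear_combination (-2*u^3) * Real.cosh_sq u
  · intro u hu
    exact mul_pos (by linarith) (lemG hu)

theorem stmt_10 (x y : ℝ) (hx : 0 < x) (hy0 : 0 < y) (hy1 : y < 1) :
    8 / (Real.sinh (2 * x) - 2 * x) -
      (coth (x * y) + x * y * (1 - (coth (x * y)) ^ 2)) / (x * y * coth (x * y) - 1) ^ 2
      < 0 := by
  set t := x * y with htdef
  have ht : 0 < t := mul_pos hx hy0
  have htx : t < x := by
    calc t = x * y := rfl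
    _ < x * 1 := by exact mul_lt_mul_of_pos_left hy1 hx
    _ = x := mul_one x
  set s := Real.sinh t with hsdef
  set c := Real.cosh t with hcdef
  have hs : 0 < s := Real.sinh_pos_iff.2 ht
  have hc : 0 < c := Real.cosh_pos t
  have hc2 : c ^ 2 = s ^ 2 + 1 := Real.cosh_sq t
  have hB : 0 < t * c - s := lemB ht
  have hF := lemF ht
  -- c*s - t > 0 from sinh(2t) > 2t
  have hcs : 0 < c * s - t := by
    have h2t := (Real.self_lt_sinh_iff (x := 2 * t)).2 (by linarith)
    rw [Real.sinh_two_mul] at h2t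
    nlinarith
  -- D := sinh(2x) - 2x > 4/3 x^3
  have hD : 4 / 3 * x ^ 3 < Real.sinh (2 * x) - 2 * x := by
    have := lemP (t := 2 * x) (by linarith)
    nlinarith
  have hDpos : 0 < Real.sinh (2 * x) - 2 * x := lt_trans (by positivity) hD
  have hexpr : (coth t + t * (1 - (coth t) ^ 2)) / (t * coth t - 1) ^ 2
      = (c * s - t) / (t * c - s) ^ 2 := by
    have hs' : s ≠ 0 := hs.ne'
    have hB' : t * c - s ≠ 0 := hB.ne'
    rw [coth, ← hsdef, ← hcdef]
    field_simp
    linear_combination (-(x * y / (x * y * c - s) ^ 2)) * hc2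
  rw [sub_neg, hexpr]
  have hratio : 6 / t ^ 3 < (c * s - t) / (t * c - s) ^ 2 := by
    rw [div_lt_div_iff₀ (by positivity) (by positivity)]
    nlinarith
  have h1 : 8 / (Real.sinh (2 * x) - 2 * x) < 6 / x ^ 3 := by
    rw [div_lt_div_iff₀ hDpos (by positivity)]
    nlinarith
  have h2 : 6 / x ^ 3 < 6 / t ^ 3 := by
    apply div_lt_div_of_pos_left (by norm_num) (by positivity)
    exact pow_lt_pow_left₀ htx ht.le (by norm_num)
  linarith
end

section
/- Let x > 0 and 0 < β < 1, with φ(a) = sinh(a) - a. Then φ(2x√β) < β^{3/2} φ(2x). -/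
noncomputable def φ (a : ℝ) : ℝ := Real.sinh a - a

lemma L1 (y : ℝ) (hy0 : 0 < y) (hy1 : y < 1) :
    ∀ x > 0, Real.sinh (x * y) < y * Real.sinh x := by
  have h : StrictMonoOn (fun x => y * Real.sinh x - Real.sinh (x * y)) (Set.Ici 0) := by
    apply strictMonoOn_of_deriv_pos (convex_Ici 0) (by fun_prop)
    intro t ht
    rw [interior_Ici] at ht
    have ht' : 0 < t := ht
    have hd : HasDerivAt (fun x => y * Real.sinh x - Real.sinh (x * y))
        (y * Real.cosh t - Real.cosh (t * y) * (1 * y)) t :=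
      ((Real.hasDerivAt_sinh t).const_mul y).sub
        (((hasDerivAt_id t).mul_const y).sinh)
    rw [hd.deriv]
    have hc : Real.cosh (t * y) < Real.cosh t := by
      rw [Real.cosh_lt_cosh]
      rw [abs_of_pos (mul_pos ht hy0), abs_of_pos ht]
      nlinarith
    nlinarith
  intro x hx
  have := h (Set.self_mem_Ici) (Set.mem_Ici.mpr hx.le) hx
  simp at this
  linarith

lemma L2 (y : ℝ) (hy0 : 0 < y) (hy1 : y < 1) :
    ∀ x > 0, Real.cosh (x * y) - 1 < y ^ 2 * (Real.cosh x - 1) := by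
  have h : StrictMonoOn (fun x => y ^ 2 * (Real.cosh x - 1) - (Real.cosh (x * y) - 1)) (Set.Ici 0) := by
    apply strictMonoOn_of_deriv_pos (convex_Ici 0) (by fun_prop)
    intro t ht
    rw [interior_Ici] at ht
    have ht' : 0 < t := ht
    have hd : HasDerivAt (fun x => y ^ 2 * (Real.cosh x - 1) - (Real.cosh (x * y) - 1))
        (y ^ 2 * Real.sinh t - Real.sinh (t * y) * (1 * y)) t :=
      ((((Real.hasDerivAt_cosh t).sub_const 1).const_mul (y ^ 2))).sub
        ((((hasDerivAt_id t).mul_const y).cosh).sub_const 1)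
    rw [hd.deriv]
    have h1 := L1 y hy0 hy1 t ht
    nlinarith
  intro x hx
  have := h (Set.self_mem_Ici) (Set.mem_Ici.mpr hx.le) hx
  simp at this
  linarith

lemma L3 (y : ℝ) (hy0 : 0 < y) (hy1 : y < 1) :
    ∀ x > 0, Real.sinh (x * y) - x * y < y ^ 3 * (Real.sinh x - x) := by
  have h : StrictMonoOn (fun x => y ^ 3 * (Real.sinh x - x) - (Real.sinh (x * y) - x * y)) (Set.Ici 0) := by
    apply strictMonoOn_of_deriv_pos (convex_Ici 0) (by fun_prop)
    intro t ht
    rw [interior_Ici] at ht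
    have ht' : 0 < t := ht
    have hd : HasDerivAt (fun x => y ^ 3 * (Real.sinh x - x) - (Real.sinh (x * y) - x * y))
        (y ^ 3 * (Real.cosh t - 1) - (Real.cosh (t * y) * (1 * y) - 1 * y)) t :=
      (((Real.hasDerivAt_sinh t).sub (hasDerivAt_id t)).const_mul (y ^ 3)).sub
        ((((hasDerivAt_id t).mul_const y).sinh).sub ((hasDerivAt_id t).mul_const y))
    rw [hd.deriv]
    have h2 := L2 y hy0 hy1 t ht
    nlinarith
  intro x hx
  have := h (Set.self_mem_Ici) (Set.mem_Ici.mpr hx.le) hx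
  simp at this
  linarith

theorem stmt_12 (x β : ℝ) (hx : 0 < x) (hβ0 : 0 < β) (hβ1 : β < 1) :
    φ (2 * x * Real.sqrt β) < β ^ ((3 : ℝ) / 2) * φ (2 * x) := by
  have hs0 : 0 < Real.sqrt β := Real.sqrt_pos.mpr hβ0
  have hs1 : Real.sqrt β < 1 := by
    rw [show (1:ℝ) = Real.sqrt 1 by simp]
    exact Real.sqrt_lt_sqrt hβ0.le hβ1
  have h := L3 (Real.sqrt β) hs0 hs1 (2 * x) (by linarith)
  have hpow : β ^ ((3 : ℝ) / 2) = Real.sqrt β ^ 3 := by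
    rw [Real.sqrt_eq_rpow, ← Real.rpow_natCast (β ^ ((1:ℝ)/2)) 3, ← Real.rpow_mul hβ0.le]
    norm_num
  simp only [φ, hpow]
  linarith
end

section
/- Let 0 < s < 1, r > 0, and β with s^2 ≤ β ≤ 1 (arising as β = s² cos²θ + sin²θ). Define ψ(a) = a coth(a) - 1, φ(a) = sinh(a) - a, P₁ = 2√β (ψ(r√β) - ψ(r))/r, P₂² = 16(β - s²)(1 - β) ψ(r√β)²/β, and P₃ = (1/(2β√β)) ( (s²/√β) φ(2r√β) - β² φ(2r) + 4r(β - s²)(1 - β) ψ(r√β) ). If s² < β < 1, then P₂² - 4 P₁ P₃ < 0. -/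
/-!
Put `b = √β`. Clearing denominators, the discriminant is `4 / (r b³)` times
`4 r b (b² - s²) (1 - b²) ψ(rb) ψ(r) + s² (ψ(r) - ψ(rb)) φ(2rb) - b⁵ (ψ(r) - ψ(rb)) φ(2r)`.
Two inequalities control this: `φ(bt) < b³ φ(t)` for `0 < b < 1` (integrate `sinh(bt) < b sinh t`
twice), and `4 r (1 - b²) ψ(rb) ψ(r) < b² (ψ(r) - ψ(rb)) φ(2r)`, which says that
`c ↦ 1/ψ(rc) - 4r / (φ(2r) c²)` decreases on `[b, 1]`; the sign of its derivative comes from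
`4 (a cosh a - sinh a) < φ(2a)` together with the first inequality. Using the first one on the
`s²` term bounds the numerator by `b (b² - s²)` times a quantity that the second makes negative.
-/

open Real Set

theorem sub_lt_sub_of_hasDerivAt_lt {f g f' g' : ℝ → ℝ} {a b : ℝ} (hab : a < b)
    (hf : ∀ x ∈ Icc a b, HasDerivAt f (f' x) x) (hg : ∀ x ∈ Icc a b, HasDerivAt g (g' x) x)
    (hlt : ∀ x ∈ Ioo a b, f' x < g' x) : f b - f a < g b - g a := by
  have hderiv : ∀ x ∈ Icc a b, HasDerivAt (g - f) (g' x - f' x) x :=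
    fun x hx => (hg x hx).sub (hf x hx)
  have hmono : StrictMonoOn (g - f) (Icc a b) := by
    refine strictMonoOn_of_deriv_pos (convex_Icc a b) (HasDerivAt.continuousOn hderiv) ?_
    intro x hx
    rw [interior_Icc] at hx
    rw [(hderiv x (Ioo_subset_Icc_self hx)).deriv]
    exact sub_pos.2 (hlt x hx)
  have := hmono (left_mem_Icc.2 hab.le) (right_mem_Icc.2 hab.le) hab
  simp only [Pi.sub_apply] at this
  linarith

section Scaling

variable {b t : ℝ}

theorem sinh_mul_lt_mul_sinh (hb0 : 0 < b) (hb1 : b < 1) (ht : 0 < t) :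
    sinh (b * t) < b * sinh t := by
  have := sub_lt_sub_of_hasDerivAt_lt ht (fun x _ => (hasDerivAt_const_mul b).sinh)
    (fun x _ => (hasDerivAt_sinh x).const_mul b) fun x hx => by
      have hcosh : cosh (b * x) < cosh x := by
        rw [cosh_lt_cosh, abs_of_pos (mul_pos hb0 hx.1), abs_of_pos hx.1]
        exact mul_lt_of_lt_one_left hx.1 hb1
      linarith [mul_lt_mul_of_pos_left hcosh hb0]
  simpa using this

theorem cosh_mul_sub_one_lt (hb0 : 0 < b) (hb1 : b < 1) (ht : 0 < t) :
    cosh (b * t) - 1 < b ^ 2 * (cosh t - 1) := by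
  have := sub_lt_sub_of_hasDerivAt_lt ht (fun x _ => (hasDerivAt_const_mul b).cosh)
    (fun x _ => (hasDerivAt_cosh x).const_mul (b ^ 2)) fun x hx => by
      nlinarith [sinh_mul_lt_mul_sinh hb0 hb1 hx.1]
  simp only [mul_zero, cosh_zero] at this
  linarith

theorem φ_mul_lt (hb0 : 0 < b) (hb1 : b < 1) (ht : 0 < t) : φ (b * t) < b ^ 3 * φ t := by
  have := sub_lt_sub_of_hasDerivAt_lt ht
    (fun x _ => (hasDerivAt_const_mul b).sinh.sub (hasDerivAt_const_mul b))
    (fun x _ => ((hasDerivAt_sinh x).sub (hasDerivAt_id' x)).const_mul (b ^ 3)) fun x hx => by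
      nlinarith [cosh_mul_sub_one_lt hb0 hb1 hx.1]
  simpa [φ] using this

end Scaling

section HyperbolicBounds

variable {a : ℝ}

theorem mul_cosh_sub_sinh_pos (ha : 0 < a) : 0 < a * cosh a - sinh a := by
  have := sub_lt_sub_of_hasDerivAt_lt ha (g := fun x => x * cosh x) (fun x _ => hasDerivAt_sinh x)
    (fun x _ => (hasDerivAt_id' x).mul (hasDerivAt_cosh x)) fun x hx => by
      nlinarith [mul_pos hx.1 (sinh_pos_iff.2 hx.1)]
  simp only [sinh_zero, zero_mul, sub_zero] at this
  linarith

theorem four_mul_mul_cosh_sub_sinh_lt_φ_two_mul (ha : 0 < a) :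
    4 * (a * cosh a - sinh a) < φ (2 * a) := by
  have := sub_lt_sub_of_hasDerivAt_lt ha (f := fun x => x * (2 * cosh x + 1))
    (g := fun x => sinh x * (cosh x + 2))
    (fun x _ => (hasDerivAt_id' x).mul (((hasDerivAt_cosh x).const_mul 2).add_const 1))
    (fun x _ => (hasDerivAt_sinh x).mul ((hasDerivAt_cosh x).add_const 2)) fun x hx => by
      have hsinh := sinh_pos_iff.2 hx.1
      nlinarith [cosh_sq_sub_sinh_sq x, mul_pos hsinh (sub_pos.2 (self_lt_sinh_iff.2 hx.1))]
  simp only [sinh_zero, zero_mul] at this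
  rw [φ, sinh_two_mul]
  linarith

theorem φ_pos (ha : 0 < a) : 0 < φ a := by
  rw [φ]
  linarith [self_lt_sinh_iff.2 ha]

theorem ψ_eq_div (ha : sinh a ≠ 0) : ψ a = (a * cosh a - sinh a) / sinh a := by
  rw [ψ, coth]
  field_simp

theorem ψ_pos (ha : 0 < a) : 0 < ψ a := by
  rw [ψ_eq_div (sinh_pos_iff.2 ha).ne']
  exact div_pos (mul_cosh_sub_sinh_pos ha) (sinh_pos_iff.2 ha)

theorem inv_ψ_eq (ha : 0 < a) : (ψ a)⁻¹ = sinh a / (a * cosh a - sinh a) := by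
  rw [ψ_eq_div (sinh_pos_iff.2 ha).ne', inv_div]

theorem hasDerivAt_sinh_div_mul_cosh_sub_sinh (ha : 0 < a) :
    HasDerivAt (fun x => sinh x / (x * cosh x - sinh x))
      (-φ (2 * a) / (2 * (a * cosh a - sinh a) ^ 2)) a := by
  have hN := (mul_cosh_sub_sinh_pos ha).ne'
  have hden : HasDerivAt (fun x => x * cosh x - sinh x) (1 * cosh a + a * sinh a - cosh a) a :=
    ((hasDerivAt_id' a).mul (hasDerivAt_cosh a)).sub (hasDerivAt_sinh a)
  refine ((hasDerivAt_sinh a).div hden hN).congr_deriv ?_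
  rw [φ, sinh_two_mul, div_eq_div_iff (by positivity) (by positivity)]
  linear_combination (2 * a * (a * cosh a - sinh a) ^ 2) * cosh_sq_sub_sinh_sq a

end HyperbolicBounds

theorem sq_mul_cosh_sub_sinh_lt_mul_φ {r c : ℝ} (hr : 0 < r) (hc0 : 0 < c) (hc1 : c < 1) :
    16 * (r * c * cosh (r * c) - sinh (r * c)) ^ 2 < c ^ 3 * φ (2 * r) * φ (2 * (r * c)) := by
  have ha : 0 < r * c := mul_pos hr hc0
  have hN := mul_cosh_sub_sinh_pos ha
  have hC := four_mul_mul_cosh_sub_sinh_lt_φ_two_mul ha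
  have hA : φ (2 * (r * c)) < c ^ 3 * φ (2 * r) := by
    rw [show 2 * (r * c) = c * (2 * r) by ring]
    exact φ_mul_lt hc0 hc1 (by positivity)
  nlinarith [mul_lt_mul_of_pos_left hA (φ_pos (by positivity : 0 < 2 * (r * c)))]

theorem ψ_mul_mul_ψ_lt {r b : ℝ} (hr : 0 < r) (hb0 : 0 < b) (hb1 : b < 1) :
    4 * r * (1 - b ^ 2) * ψ (r * b) * ψ r < b ^ 2 * (ψ r - ψ (r * b)) * φ (2 * r) := by
  have hφ : 0 < φ (2 * r) := φ_pos (by positivity)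
  set K := 4 * r / φ (2 * r)
  -- By `inv_ψ_eq`, this says that `c ↦ (ψ (r c))⁻¹ - K / c²` decreases on `[b, 1]`.
  have key := sub_lt_sub_of_hasDerivAt_lt hb1
    (f := fun c => sinh (r * c) / (r * c * cosh (r * c) - sinh (r * c)))
    (g := fun c => K * (c ^ 2)⁻¹) (g' := fun c => -(8 / (φ (2 * r) * c ^ 3)) * r)
    (fun c hc => (hasDerivAt_sinh_div_mul_cosh_sub_sinh (mul_pos hr (hb0.trans_le hc.1))).comp c
      (hasDerivAt_const_mul r))
    (fun c hc => by
      have hc0 : 0 < c := hb0.trans_le hc.1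
      refine (((hasDerivAt_pow 2 c).inv (by positivity)).const_mul K).congr_deriv ?_
      simp only [K]
      field_simp
      ring)
    fun c hc => by
      have hc0 : 0 < c := hb0.trans hc.1
      have hN := mul_cosh_sub_sinh_pos (mul_pos hr hc0)
      rw [neg_div, neg_mul, neg_mul, neg_lt_neg_iff, mul_lt_mul_iff_left₀ hr,
        div_lt_div_iff₀ (by positivity) (by positivity)]
      linarith [sq_mul_cosh_sub_sinh_lt_mul_φ hr hc0 hc.2]
  have hψr := ψ_pos hr
  have hψrb := ψ_pos (mul_pos hr hb0)
  simp only [mul_one, one_pow, inv_one, ← inv_ψ_eq hr, ← inv_ψ_eq (mul_pos hr hb0), K] at key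
  field_simp at key
  rw [mul_comm r 2, lt_div_iff₀ hφ] at key
  linarith

theorem discriminant_numerator_neg {s r b : ℝ} (hr : 0 < r) (hb0 : 0 < b) (hb1 : b < 1)
    (hsb : s ^ 2 < b ^ 2) :
    4 * r * b * (b ^ 2 - s ^ 2) * (1 - b ^ 2) * ψ (r * b) * ψ r +
      s ^ 2 * (ψ r - ψ (r * b)) * φ (2 * r * b) - b ^ 5 * (ψ r - ψ (r * b)) * φ (2 * r) < 0 := by
  have hB := ψ_mul_mul_ψ_lt hr hb0 hb1
  have hψ : 0 < ψ r - ψ (r * b) := by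
    have hψr := ψ_pos hr
    have hψrb := ψ_pos (mul_pos hr hb0)
    have hb : 0 < 1 - b ^ 2 := by nlinarith
    have hrhs := (show 0 < 4 * r * (1 - b ^ 2) * ψ (r * b) * ψ r by positivity).trans hB
    exact pos_of_mul_pos_right (pos_of_mul_pos_left hrhs (φ_pos (by positivity)).le) (sq_nonneg b)
  have hA : φ (2 * r * b) < b ^ 3 * φ (2 * r) := by
    rw [mul_comm (2 * r) b]
    exact φ_mul_lt hb0 hb1 (by positivity)
  have h1 := mul_le_mul_of_nonneg_left hA.le (mul_nonneg (sq_nonneg s) hψ.le)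
  have h2 := mul_lt_mul_of_pos_left hB (mul_pos (sub_pos.2 hsb) hb0)
  linarith

theorem stmt_13_general (s r β : ℝ) (hr : 0 < r)
    (hβl : s ^ 2 < β) (hβu : β < 1)
    (P₁ P₂sq P₃ : ℝ)
    (hP₁ : P₁ = 2 * Real.sqrt β * (ψ (r * Real.sqrt β) - ψ r) / r)
    (hP₂sq : P₂sq = 16 * (β - s ^ 2) * (1 - β) * (ψ (r * Real.sqrt β)) ^ 2 / β)
    (hP₃ : P₃ = (1 / (2 * β * Real.sqrt β)) *
      ((s ^ 2 / Real.sqrt β) * φ (2 * r * Real.sqrt β) - β ^ 2 * φ (2 * r) +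
        4 * r * (β - s ^ 2) * (1 - β) * ψ (r * Real.sqrt β))) :
    P₂sq - 4 * P₁ * P₃ < 0 := by
  have hβ0 : 0 < β := (sq_nonneg s).trans_lt hβl
  set b := √β
  have hb2 : b ^ 2 = β := sq_sqrt hβ0.le
  have hb0 : 0 < b := sqrt_pos.2 hβ0
  have hb1 : b < 1 := by nlinarith
  have heq : P₂sq - 4 * P₁ * P₃ = 4 / (r * b ^ 3) *
      (4 * r * b * (b ^ 2 - s ^ 2) * (1 - b ^ 2) * ψ (r * b) * ψ r +
        s ^ 2 * (ψ r - ψ (r * b)) * φ (2 * r * b) - b ^ 5 * (ψ r - ψ (r * b)) * φ (2 * r)) := by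
    rw [hP₁, hP₂sq, hP₃, ← hb2]
    field_simp
    ring
  rw [heq]
  exact mul_neg_of_pos_of_neg (by positivity) (discriminant_numerator_neg hr hb0 hb1 (hb2 ▸ hβl))

theorem stmt_13 (s r β : ℝ) (hs0 : 0 < s) (hs1 : s < 1) (hr : 0 < r)
    (hβl : s ^ 2 < β) (hβu : β < 1)
    (P₁ P₂sq P₃ : ℝ)
    (hP₁ : P₁ = 2 * Real.sqrt β * (ψ (r * Real.sqrt β) - ψ r) / r)
    (hP₂sq : P₂sq = 16 * (β - s ^ 2) * (1 - β) * (ψ (r * Real.sqrt β)) ^ 2 / β)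
    (hP₃ : P₃ = (1 / (2 * β * Real.sqrt β)) *
      ((s ^ 2 / Real.sqrt β) * φ (2 * r * Real.sqrt β) - β ^ 2 * φ (2 * r) +
        4 * r * (β - s ^ 2) * (1 - β) * ψ (r * Real.sqrt β))) :
    P₂sq - 4 * P₁ * P₃ < 0 :=
  stmt_13_general s r β hr hβl hβu P₁ P₂sq P₃ hP₁ hP₂sq hP₃
end

section
/- For real numbers 0 < r₁, 0 < r₂, 0 < Δθ < π, and t ∈ [0,1], coth((1-t) r₁ + t r₂) ≤ (coth(r₁) sin((1-t)Δθ) + coth(r₂) sin(tΔθ)) / sin(Δθ), with strict inequality when 0 < t < 1 and (r₁ ≠ r₂ or Δθ arbitrary with the sine bound strict). -/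
open Real Set

lemma hasDerivAt_coth_s15 {x : ℝ} (hx : x ≠ 0) : HasDerivAt coth (-(sinh x ^ 2)⁻¹) x := by
  have hs : sinh x ≠ 0 := sinh_ne_zero.2 hx
  refine ((hasDerivAt_cosh x).div (hasDerivAt_sinh x) hs).congr_deriv ?_
  field_simp
  linear_combination -cosh_sq_sub_sinh_sq x

lemma coth_pos {x : ℝ} (hx : 0 < x) : 0 < coth x :=
  div_pos (cosh_pos x) (sinh_pos_iff.2 hx)

lemma strictConvexOn_coth : StrictConvexOn ℝ (Ioi 0) coth := by
  refine StrictMonoOn.strictConvexOn_of_deriv (convex_Ioi 0)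
    (fun x hx => (hasDerivAt_coth_s15 (ne_of_gt hx)).continuousAt.continuousWithinAt) ?_
  rw [interior_Ioi]
  intro a ha b hb hab
  rw [(hasDerivAt_coth_s15 (ne_of_gt ha)).deriv, (hasDerivAt_coth_s15 (ne_of_gt hb)).deriv,
    neg_lt_neg_iff]
  have hsinh_a : 0 < sinh a := sinh_pos_iff.2 ha
  have hsinh : sinh a < sinh b := sinh_lt_sinh.2 hab
  gcongr

lemma mul_sin_le_sin_mul {θ s : ℝ} (hθ₀ : 0 ≤ θ) (hθπ : θ ≤ π) (hs₀ : 0 ≤ s) (hs₁ : s ≤ 1) :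
    s * sin θ ≤ sin (s * θ) := by
  simpa using strictConcaveOn_sin_Icc.concaveOn.2 (x := 0) (y := θ)
    ⟨le_rfl, pi_pos.le⟩ ⟨hθ₀, hθπ⟩ (sub_nonneg.2 hs₁) hs₀ (sub_add_cancel 1 s)

lemma mul_sin_lt_sin_mul {θ s : ℝ} (hθ₀ : 0 < θ) (hθπ : θ ≤ π) (hs₀ : 0 < s) (hs₁ : s < 1) :
    s * sin θ < sin (s * θ) := by
  simpa using strictConcaveOn_sin_Icc.2 (x := 0) (y := θ)
    ⟨le_rfl, pi_pos.le⟩ ⟨hθ₀.le, hθπ⟩ hθ₀.ne (sub_pos.2 hs₁) hs₀ (sub_add_cancel 1 s)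

section SineWeights

variable {a b θ t : ℝ}

lemma one_sub_mul_add_mul_le_div_sin (ha : 0 ≤ a) (hb : 0 ≤ b) (hθ₀ : 0 < θ) (hθπ : θ < π)
    (ht₀ : 0 ≤ t) (ht₁ : t ≤ 1) :
    (1 - t) * a + t * b ≤ (a * sin ((1 - t) * θ) + b * sin (t * θ)) / sin θ := by
  rw [le_div_iff₀ (sin_pos_of_pos_of_lt_pi hθ₀ hθπ)]
  calc ((1 - t) * a + t * b) * sin θ = a * ((1 - t) * sin θ) + b * (t * sin θ) := by ring
    _ ≤ a * sin ((1 - t) * θ) + b * sin (t * θ) := by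
      gcongr
      · exact mul_sin_le_sin_mul hθ₀.le hθπ.le (by linarith) (by linarith)
      · exact mul_sin_le_sin_mul hθ₀.le hθπ.le ht₀ ht₁

lemma one_sub_mul_add_mul_lt_div_sin (ha : 0 ≤ a) (hb : 0 < b) (hθ₀ : 0 < θ) (hθπ : θ < π)
    (ht₀ : 0 < t) (ht₁ : t < 1) :
    (1 - t) * a + t * b < (a * sin ((1 - t) * θ) + b * sin (t * θ)) / sin θ := by
  rw [lt_div_iff₀ (sin_pos_of_pos_of_lt_pi hθ₀ hθπ)]
  calc ((1 - t) * a + t * b) * sin θ = a * ((1 - t) * sin θ) + b * (t * sin θ) := by ring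
    _ < a * sin ((1 - t) * θ) + b * sin (t * θ) := by
      refine add_lt_add_of_le_of_lt ?_ ?_
      · gcongr
        exact mul_sin_le_sin_mul hθ₀.le hθπ.le (by linarith) (by linarith)
      · gcongr
        exact mul_sin_lt_sin_mul hθ₀ hθπ.le ht₀ ht₁

end SineWeights

theorem stmt_15 (r₁ r₂ Δθ t : ℝ) (hr₁ : 0 < r₁) (hr₂ : 0 < r₂)
    (hΔθ0 : 0 < Δθ) (hΔθπ : Δθ < Real.pi) (ht0 : 0 ≤ t) (ht1 : t ≤ 1) :
    coth ((1 - t) * r₁ + t * r₂) ≤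
      (coth r₁ * Real.sin ((1 - t) * Δθ) + coth r₂ * Real.sin (t * Δθ)) / Real.sin Δθ ∧
    (0 < t → t < 1 →
      coth ((1 - t) * r₁ + t * r₂) <
        (coth r₁ * Real.sin ((1 - t) * Δθ) + coth r₂ * Real.sin (t * Δθ)) /
          Real.sin Δθ) := by
  have hconv : coth ((1 - t) * r₁ + t * r₂) ≤ (1 - t) * coth r₁ + t * coth r₂ :=
    strictConvexOn_coth.convexOn.2 hr₁ hr₂ (by linarith) ht0 (by ring)
  refine ⟨hconv.trans (one_sub_mul_add_mul_le_div_sin (coth_pos hr₁).le (coth_pos hr₂).le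
    hΔθ0 hΔθπ ht0 ht1), fun ht0' ht1' => ?_⟩
  exact hconv.trans_lt
    (one_sub_mul_add_mul_lt_div_sin (coth_pos hr₁).le (coth_pos hr₂) hΔθ0 hΔθπ ht0' ht1')
end
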